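/- arXiv:1908.01833 — 2 statements merged into one kernel-verified Lean document; each statement's English description precedes it below -/
import Mathlib

section
/- Suppose for each b ≥ 1 a polynomial P_b ∈ ℝ[t] satisfies ∫_{−1/2}^{1/2} |b√(t+1) − P_b(t)| dt/|t| ≤ 1. Then deg(P_b) → ∞ as b → ∞; equivalently, there is no finite D with deg(P_b) ≤ D for all b ≥ 1. -/
/-!
If the degrees of `P_b` stayed below `N` for arbitrarily large `b`, then, as `|t| ≤ 1`, the
hypothesis gives `∫ |√(t+1) - P_b(t)/b| dt ≤ 1/b` over `(-1/2, 1/2)`, so `√(t+1)` would be an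
`L¹`-limit of polynomials of degree `< N`. These form a finite-dimensional, hence closed, subspace
of `L¹`, so `√(t+1)` would agree almost everywhere, and by continuity everywhere on the interval,
with a polynomial `q`. Then `q² = X + 1`, whose degree is odd.
-/

open MeasureTheory Polynomial Filter Set Topology

namespace Polynomial

variable {a b : ℝ}

theorem integrableOn_Ioo_eval (p : ℝ[X]) : IntegrableOn (fun t => p.eval t) (Ioo a b) :=
  p.continuous.integrableOn_Icc.mono_set Ioo_subset_Icc_self

noncomputable def toL1Ioo (a b : ℝ) : ℝ[X] →ₗ[ℝ] Lp ℝ 1 (volume.restrict (Ioo a b)) where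
  toFun p := (integrableOn_Ioo_eval p).toL1 _
  map_add' p q := by
    simp_rw [eval_add]
    exact Integrable.toL1_add _ _ _ _
  map_smul' c p := by
    simp_rw [eval_smul, smul_eq_mul]
    exact Integrable.toL1_smul _ _ c

theorem coeFn_toL1Ioo (p : ℝ[X]) :
    toL1Ioo a b p =ᵐ[volume.restrict (Ioo a b)] fun t => p.eval t :=
  (integrableOn_Ioo_eval p).coeFn_toL1

theorem exists_eqOn_of_tendsto_lintegral {ι : Type*} {l : Filter ι} [l.NeBot] {n : ℕ}
    {f : ℝ → ℝ} (hf : ContinuousOn f (Icc a b)) {p : ι → ℝ[X]}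
    (hp : ∀ᶠ i in l, p i ∈ degreeLT ℝ n)
    (hlim : Tendsto (fun i => ∫⁻ t in Ioo a b, ‖f t - (p i).eval t‖ₑ) l (𝓝 0)) :
    ∃ q ∈ degreeLT ℝ n, EqOn (fun t => q.eval t) f (Ioo a b) := by
  have hfL1 : IntegrableOn f (Ioo a b) := hf.integrableOn_Icc.mono_set Ioo_subset_Icc_self
  have hclosed := ((degreeLT ℝ n).map (toL1Ioo a b)).closed_of_finiteDimensional
  have htend : Tendsto (fun i => toL1Ioo a b (p i)) l (𝓝 (hfL1.toL1 f)) := by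
    rw [Lp.tendsto_Lp_iff_tendsto_eLpNorm']
    refine hlim.congr fun i => ?_
    rw [eLpNorm_one_eq_lintegral_enorm]
    refine lintegral_congr_ae ?_
    filter_upwards [coeFn_toL1Ioo (p i), hfL1.coeFn_toL1] with t hpt hft
    rw [Pi.sub_apply, hpt, hft, enorm_sub_rev]
  obtain ⟨q, hq, hqf⟩ :=
    hclosed.mem_of_tendsto htend (hp.mono fun i hi => Submodule.mem_map_of_mem hi)
  refine ⟨q, hq, Measure.eqOn_open_of_ae_eq (μ := volume) ?_ isOpen_Ioo q.continuous.continuousOn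
    (hf.mono Ioo_subset_Icc_self)⟩
  exact (coeFn_toL1Ioo q).symm.trans (hqf ▸ hfL1.coeFn_toL1)

theorem not_eqOn_sqrt_add_one {s : Set ℝ} (hs : s.Infinite) (hs' : s ⊆ Ici (-1)) (q : ℝ[X]) :
    ¬ EqOn (fun t => q.eval t) (fun t => √(t + 1)) s := by
  intro hq
  have hsq : q ^ 2 = X + C 1 := by
    refine eq_of_infinite_eval_eq _ _ (hs.mono fun t ht => ?_)
    have : -1 ≤ t := hs' ht
    simp [hq ht, Real.sq_sqrt (by linarith : (0 : ℝ) ≤ t + 1)]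
  have hdeg := congrArg natDegree hsq
  rw [natDegree_pow, natDegree_X_add_C] at hdeg
  omega

end Polynomial

theorem lintegral_enorm_le_lintegral_div_abs {s : Set ℝ} (hs : MeasurableSet s)
    (hs₁ : ∀ t ∈ s, |t| ≤ 1) (g : ℝ → ℝ) :
    ∫⁻ t in s, ‖g t‖ₑ ≤ ∫⁻ t in s, ENNReal.ofReal (|g t| / |t|) := by
  refine lintegral_mono_ae ?_
  -- `|g t| / |t|` is `0` at `t = 0`, so the comparison only holds almost everywhere.
  filter_upwards [ae_restrict_mem hs, ae_restrict_of_ae (volume.ae_ne 0)] with t hts ht0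
  rw [Real.enorm_eq_ofReal_abs]
  exact ENNReal.ofReal_le_ofReal (le_div_self (abs_nonneg _) (abs_pos.2 ht0) (hs₁ t hts))

theorem lintegral_enorm_sqrt_sub_inv_smul_le {b : ℝ} (hb : 0 < b) (p : ℝ[X])
    (hp : ∫⁻ t in Ioc (-(1 : ℝ) / 2) (1 / 2),
        ENNReal.ofReal (|b * √(t + 1) - p.eval t| / |t|) ≤ 1) :
    ∫⁻ t in Ioo (-(1 : ℝ) / 2) (1 / 2), ‖√(t + 1) - (b⁻¹ • p).eval t‖ₑ ≤ ENNReal.ofReal b⁻¹ := by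
  have hscale : ∀ t, ‖√(t + 1) - (b⁻¹ • p).eval t‖ₑ =
      ENNReal.ofReal b⁻¹ * ‖b * √(t + 1) - p.eval t‖ₑ := fun t => by
    rw [← Real.enorm_of_nonneg (inv_nonneg.2 hb.le), ← enorm_mul, eval_smul, smul_eq_mul,
      mul_sub, inv_mul_cancel_left₀ hb.ne']
  calc ∫⁻ t in Ioo (-(1 : ℝ) / 2) (1 / 2), ‖√(t + 1) - (b⁻¹ • p).eval t‖ₑ
      = ENNReal.ofReal b⁻¹ * ∫⁻ t in Ioo (-(1 : ℝ) / 2) (1 / 2), ‖b * √(t + 1) - p.eval t‖ₑ := by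
        simp_rw [hscale]
        exact lintegral_const_mul' _ _ ENNReal.ofReal_ne_top
    _ ≤ ENNReal.ofReal b⁻¹ * ∫⁻ t in Ioo (-(1 : ℝ) / 2) (1 / 2),
          ENNReal.ofReal (|b * √(t + 1) - p.eval t| / |t|) := by
        exact mul_le_mul_right (lintegral_enorm_le_lintegral_div_abs measurableSet_Ioo
          (fun t ht => abs_le.2 ⟨by linarith [ht.1], by linarith [ht.2]⟩) _) _
    _ ≤ ENNReal.ofReal b⁻¹ * ∫⁻ t in Ioc (-(1 : ℝ) / 2) (1 / 2),
          ENNReal.ofReal (|b * √(t + 1) - p.eval t| / |t|) := by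
        gcongr
        exact Ioo_subset_Ioc_self
    _ ≤ ENNReal.ofReal b⁻¹ := mul_le_of_le_one_right' hp

/-- If for each `b ≥ 1` a polynomial `P_b` satisfies
`∫_{−1/2}^{1/2} |b√(t+1) − P_b(t)| dt/|t| ≤ 1`, then `deg P_b → ∞` as `b → ∞`. -/
theorem degree_tendsto_atTop (P : ℝ → Polynomial ℝ)
    (hP : ∀ b : ℝ, 1 ≤ b →
      (∫⁻ t in Set.Ioc (-(1 : ℝ) / 2) (1 / 2),
        ENNReal.ofReal (|b * Real.sqrt (t + 1) - (P b).eval t| / |t|)) ≤ 1) :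
    Tendsto (fun b : ℝ => (P b).natDegree) atTop atTop := by
  refine tendsto_atTop.2 fun N => ?_
  by_contra hN
  set l := atTop ⊓ 𝓟 {b | (P b).natDegree < N}
  have : l.NeBot := frequently_iff_neBot.1 (by simpa using not_eventually.1 hN)
  have hl : Tendsto id l atTop := tendsto_inf_left tendsto_id
  have hdeg : ∀ᶠ b in l, (P b).natDegree < N := mem_inf_of_right (mem_principal_self _)
  have hb₁ : ∀ᶠ b in l, 1 ≤ b := hl (eventually_ge_atTop 1)
  have hmem : ∀ᶠ b in l, b⁻¹ • P b ∈ degreeLT ℝ N := hdeg.mono fun b hb =>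
    (degreeLT ℝ N).smul_mem _ (mem_degreeLT.2 (degree_le_natDegree.trans_lt (mod_cast hb)))
  have hlim : Tendsto (fun b => ∫⁻ t in Ioo (-(1 : ℝ) / 2) (1 / 2),
      ‖√(t + 1) - (b⁻¹ • P b).eval t‖ₑ) l (𝓝 0) :=
    tendsto_of_tendsto_of_tendsto_of_le_of_le' tendsto_const_nhds
      (ENNReal.ofReal_zero ▸ ENNReal.tendsto_ofReal (tendsto_inv_atTop_zero.comp hl))
      (Eventually.of_forall fun _ => bot_le)
      (hb₁.mono fun b hb => lintegral_enorm_sqrt_sub_inv_smul_le (by linarith) _ (hP b hb))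
  obtain ⟨q, -, hq⟩ := exists_eqOn_of_tendsto_lintegral (by fun_prop) hmem hlim
  exact not_eqOn_sqrt_add_one (Ioo_infinite (by norm_num))
    (fun t ht => show (-1 : ℝ) ≤ t by linarith [ht.1]) q hq
end

section
/- Fix j ≥ 0 and parameters b_x, b_y ∈ (0, 10], h = (b_y/b_x)² ≤ 1, ξ' ∈ ℝ with |ξ'| ≥ 2^{−j/100}, and v ∈ ℝ. Let φ(s) = v·s + 2^{j/2}(√(s + 2^{−j} b_x²) − √(h·s − ξ' + 2^{−j} b_y²)) on the set where s ∈ [1/2, 2] and h·s − ξ' ∈ [1/2, 2]. Then for every such s there exists i ∈ {2,3} with |φ^{(i)}(s)| ≥ c·2^{j/3} for an absolute constant c > 0. -/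
open Filter

private lemma phase_aux_rpow {A : ℝ → ℝ} {c u : ℝ} (hA : HasDerivAt A c u) (p : ℝ)
    (h : A u ≠ 0) :
    HasDerivAt (fun x => (A x) ^ p) (p * (A u) ^ (p - 1) * c) u :=
  (Real.hasDerivAt_rpow_const (Or.inl h)).comp u hA

set_option maxHeartbeats 1000000 in
private lemma phase_aux_num (h ξ X Y p q K M Φ2 Φ3 : ℝ)
    (hhpos : 0 < h) (hh1 : h ≤ 1)
    (hX0 : (1/2:ℝ) ≤ X) (hX2 : X ≤ 102) (hY0 : (1/2:ℝ) ≤ Y) (hY2 : Y ≤ 102)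
    (hp0 : 0 < p) (hq0 : 0 < q) (hp2X : p^2 * X = 1) (hq2Y : q^2 * Y = 1)
    (hK0 : 0 < K) (hM0 : 0 < M)
    (hXi : ξ = h * X - Y)
    (hMK : M ≤ K * |ξ|)
    (hΦ2 : Φ2 = K/4 * |h^2*q^3 - p^3|)
    (hΦ3 : Φ3 = 3*K/8 * |p^5 - h^3*q^5|) :
    (1/10^9:ℝ) * M ≤ Φ2 ∨ (1/10^9:ℝ) * M ≤ Φ3 := by
  have hp2ub : p^2 ≤ 2 := by nlinarith [mul_nonneg (sq_nonneg p) (by linarith : (0:ℝ) ≤ X - 1/2)]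
  have hp2lb : 1/102 ≤ p^2 := by
    nlinarith [mul_nonneg (sq_nonneg p) (by linarith : (0:ℝ) ≤ 102 - X)]
  have hq2ub : q^2 ≤ 2 := by nlinarith [mul_nonneg (sq_nonneg q) (by linarith : (0:ℝ) ≤ Y - 1/2)]
  have hq2lb : 1/102 ≤ q^2 := by
    nlinarith [mul_nonneg (sq_nonneg q) (by linarith : (0:ℝ) ≤ 102 - Y)]
  have hp11 : 1/11 ≤ p := by
    by_contra hcon
    push_neg at hcon
    nlinarith [mul_pos (by linarith : (0:ℝ) < 1/11 - p) (by linarith : (0:ℝ) < 1/11 + p)]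
  have hq32 : q ≤ 3/2 := by
    by_contra hcon
    push_neg at hcon
    nlinarith [mul_pos (by linarith : (0:ℝ) < q - 3/2) (by linarith : (0:ℝ) < q + 3/2)]
  have hp3 : 1/1331 ≤ p^3 := by
    nlinarith [mul_nonneg (sq_nonneg p) (by linarith : (0:ℝ) ≤ p - 1/11)]
  have hξpq : ξ = (h * q^2 - p^2) * (X * Y) := by
    linear_combination hXi - (h*X)*hq2Y + Y*hp2X
  have key1 : p^3 * |p^2 - h*q^2| ≤ 4*|h^2*q^3 - p^3| + |p^5 - h^3*q^5| := by
    have e1 : p^3 * |p^2 - h*q^2| = |h*q^2 * (h^2*q^3 - p^3) + (p^5 - h^3*q^5)| := by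
      rw [show h*q^2 * (h^2*q^3 - p^3) + (p^5 - h^3*q^5) = p^3 * (p^2 - h*q^2) from by ring,
        abs_mul, abs_of_pos (by positivity : (0:ℝ) < p^3)]
    rw [e1]
    calc |h*q^2 * (h^2*q^3 - p^3) + (p^5 - h^3*q^5)|
        ≤ |h*q^2 * (h^2*q^3 - p^3)| + |p^5 - h^3*q^5| := abs_add_le _ _
      _ ≤ 4*|h^2*q^3 - p^3| + |p^5 - h^3*q^5| := by
          rw [abs_mul, abs_of_pos (by positivity : (0:ℝ) < h*q^2)]
          have hhq : h * q^2 ≤ 4 := by nlinarith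
          nlinarith [abs_nonneg (h^2*q^3 - p^3)]
  have key2 : |ξ| ≤ 10404 * |p^2 - h*q^2| := by
    rw [hξpq, abs_mul, abs_of_pos (by positivity : (0:ℝ) < X*Y), abs_sub_comm]
    have hXY : X*Y ≤ 10404 := by nlinarith
    nlinarith [mul_le_mul_of_nonneg_left hXY (abs_nonneg (p^2 - h*q^2))]
  have key3 : |p^2 - h*q^2| ≤ 1331 * (4*|h^2*q^3 - p^3| + |p^5 - h^3*q^5|) := by
    nlinarith [key1, abs_nonneg (p^2 - h*q^2)]
  have key4 : |ξ| ≤ 13847724 * (4*|h^2*q^3 - p^3| + |p^5 - h^3*q^5|) := by linarith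
  have key5 : K * |ξ| ≤ K * (13847724 * (4*|h^2*q^3 - p^3| + |p^5 - h^3*q^5|)) :=
    mul_le_mul_of_nonneg_left key4 hK0.le
  have hKA : K * |h^2*q^3 - p^3| = 4 * Φ2 := by rw [hΦ2]; ring
  have hKB : K * |p^5 - h^3*q^5| = 8/3 * Φ3 := by rw [hΦ3]; ring
  have key6 : K * (13847724 * (4*|h^2*q^3 - p^3| + |p^5 - h^3*q^5|))
      = 13847724 * (16 * Φ2 + 8/3 * Φ3) := by
    linear_combination 13847724*4*hKA + 13847724*hKB
  have final : M ≤ 13847724 * (16 * Φ2 + 8/3 * Φ3) := by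
    rw [key6] at key5; linarith
  have hΦ2n : 0 ≤ Φ2 := by rw [hΦ2]; positivity
  have hΦ3n : 0 ≤ Φ3 := by rw [hΦ3]; positivity
  rcases le_total Φ2 Φ3 with hc | hc
  · right; nlinarith
  · left; nlinarith

set_option maxHeartbeats 2000000 in
/-- Lower bound on second/third derivatives of the phase
`φ(s) = v·s + 2^{j/2}(√(s+2^{−j}b_x²) − √(h·s−ξ'+2^{−j}b_y²))`, with
`h = (b_y/b_x)² ≤ 1`, `b_x, b_y ∈ (0,10]`, `|ξ'| ≥ 2^{−j/100}`: for every `s` with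
`s ∈ [1/2,2]` and `h·s−ξ' ∈ [1/2,2]`, some derivative of order `2` or `3`
is at least `c·2^{j/3}` for an absolute constant `c > 0`. -/
theorem phase_derivative_lower_bound :
    ∃ c : ℝ, 0 < c ∧
      ∀ (j : ℕ) (bx by' ξ v : ℝ), 0 < bx → bx ≤ 10 → 0 < by' → by' ≤ bx →
        2 ^ (-(j : ℝ) / 100) ≤ |ξ| →
        ∀ s : ℝ, s ∈ Set.Icc (1 / 2 : ℝ) 2 →
          (by' / bx) ^ 2 * s - ξ ∈ Set.Icc (1 / 2 : ℝ) 2 →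
          (let φ : ℝ → ℝ := fun u =>
            v * u + 2 ^ ((j : ℝ) / 2) *
              (Real.sqrt (u + 2 ^ (-(j : ℝ)) * bx ^ 2) -
                Real.sqrt ((by' / bx) ^ 2 * u - ξ + 2 ^ (-(j : ℝ)) * by' ^ 2))
          c * 2 ^ ((j : ℝ) / 3) ≤ |iteratedDeriv 2 φ s| ∨
            c * 2 ^ ((j : ℝ) / 3) ≤ |iteratedDeriv 3 φ s|) := by
  refine ⟨1/10^9, by norm_num, ?_⟩
  intro j bx by' ξ v hbx hbx10 hby hbybx hξ s hs hsY
  obtain ⟨hs1, hs2⟩ := hs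
  obtain ⟨hY1, hY2⟩ := hsY
  set h : ℝ := (by' / bx) ^ 2 with hhdef
  set a : ℝ := 2 ^ (-(j : ℝ)) * bx ^ 2 with hadef
  set bb : ℝ := 2 ^ (-(j : ℝ)) * by' ^ 2 with hbbdef
  set K : ℝ := 2 ^ ((j : ℝ) / 2) with hKdef
  intro φ
  have hφ : φ = fun u => v * u + K * (Real.sqrt (u + a) - Real.sqrt (h * u - ξ + bb)) := rfl
  -- basic bounds
  have h2j : (0:ℝ) < 2 ^ (-(j : ℝ)) := Real.rpow_pos_of_pos two_pos _
  have h2j1 : (2:ℝ) ^ (-(j : ℝ)) ≤ 1 :=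
    Real.rpow_le_one_of_one_le_of_nonpos one_le_two (neg_nonpos.mpr (Nat.cast_nonneg j))
  have hapos : 0 < a := by rw [hadef]; positivity
  have ha100 : a ≤ 100 := by rw [hadef]; nlinarith
  have hbpos : 0 < bb := by rw [hbbdef]; positivity
  have hb100 : bb ≤ 100 := by rw [hbbdef]; nlinarith
  have hhpos : 0 < h := by rw [hhdef]; positivity
  have hh1 : h ≤ 1 := by
    rw [hhdef]
    have h1 : by' / bx ≤ 1 := (div_le_one hbx).mpr hbybx
    have h0 : 0 ≤ by' / bx := by positivity
    nlinarith
  have hK0 : 0 < K := by rw [hKdef]; positivity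
  set X : ℝ := s + a with hXdef
  set Y : ℝ := h * s - ξ + bb with hYdef
  have hX0 : (1/2 : ℝ) ≤ X := by rw [hXdef]; linarith
  have hX2 : X ≤ 102 := by rw [hXdef]; linarith
  have hY0 : (1/2 : ℝ) ≤ Y := by rw [hYdef]; linarith
  have hY2' : Y ≤ 102 := by rw [hYdef]; linarith
  have hXpos : (0:ℝ) < X := by linarith
  have hYpos : (0:ℝ) < Y := by linarith
  -- the open set
  set U : Set ℝ := {u : ℝ | 0 < u + a ∧ 0 < h * u - ξ + bb} with hUdef
  have hUo : IsOpen U := by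
    have hU2 : U = {u : ℝ | 0 < u + a} ∩ {u : ℝ | 0 < h * u - ξ + bb} := rfl
    rw [hU2]
    exact (isOpen_lt continuous_const (by continuity)).inter
      (isOpen_lt continuous_const (by continuity))
  have hsU : s ∈ U := ⟨hXpos, hYpos⟩
  have hUn : U ∈ nhds s := hUo.mem_nhds hsU
  -- derivative chain
  set φ0 : ℝ → ℝ := fun u =>
      v * u + K * ((u + a) ^ ((1:ℝ)/2) - (h * u - ξ + bb) ^ ((1:ℝ)/2)) with hφ0
  set φ1 : ℝ → ℝ := fun u =>
      v + K * ((1/2) * (u + a) ^ (-(1:ℝ)/2) - (h/2) * (h * u - ξ + bb) ^ (-(1:ℝ)/2)) with hφ1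
  set φ2 : ℝ → ℝ := fun u =>
      K * ((-(1:ℝ)/4) * (u + a) ^ (-(3:ℝ)/2) + (h^2/4) * (h * u - ξ + bb) ^ (-(3:ℝ)/2)) with hφ2
  set φ3 : ℝ → ℝ := fun u =>
      K * ((3/8) * (u + a) ^ (-(5:ℝ)/2) - (3*h^3/8) * (h * u - ξ + bb) ^ (-(5:ℝ)/2)) with hφ3
  have E0 : φ =ᶠ[nhds s] φ0 := by
    refine Filter.eventually_of_mem hUn (fun u hu => ?_)
    obtain ⟨hu1, hu2⟩ := hu
    rw [hφ, hφ0]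
    simp only
    rw [Real.sqrt_eq_rpow, Real.sqrt_eq_rpow]
  have hd1 : ∀ u ∈ U, HasDerivAt φ0 (φ1 u) u := by
    intro u hu
    obtain ⟨hu1, hu2⟩ := hu
    have A1 : HasDerivAt (fun x : ℝ => x + a) 1 u := (hasDerivAt_id u).add_const a
    have A2 : HasDerivAt (fun x : ℝ => h * x - ξ + bb) h u := by
      simpa using (((hasDerivAt_id u).const_mul h).sub_const ξ).add_const bb
    have B1 := phase_aux_rpow A1 ((1:ℝ)/2) (ne_of_gt hu1)
    have B2 := phase_aux_rpow A2 ((1:ℝ)/2) (ne_of_gt hu2)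
    have C : HasDerivAt φ0
        (v * 1 + K * ((1:ℝ)/2 * (u + a) ^ ((1:ℝ)/2 - 1) * 1 -
          (1:ℝ)/2 * (h * u - ξ + bb) ^ ((1:ℝ)/2 - 1) * h)) u :=
      ((hasDerivAt_id u).const_mul v).add ((B1.sub B2).const_mul K)
    have hval : v * 1 + K * ((1:ℝ)/2 * (u + a) ^ ((1:ℝ)/2 - 1) * 1 -
        (1:ℝ)/2 * (h * u - ξ + bb) ^ ((1:ℝ)/2 - 1) * h) = φ1 u := by
      rw [hφ1]
      simp only
      rw [show (1:ℝ)/2 - 1 = -(1:ℝ)/2 by norm_num]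
      ring
    rw [hval] at C
    exact C
  have hd2 : ∀ u ∈ U, HasDerivAt φ1 (φ2 u) u := by
    intro u hu
    obtain ⟨hu1, hu2⟩ := hu
    have A1 : HasDerivAt (fun x : ℝ => x + a) 1 u := (hasDerivAt_id u).add_const a
    have A2 : HasDerivAt (fun x : ℝ => h * x - ξ + bb) h u := by
      simpa using (((hasDerivAt_id u).const_mul h).sub_const ξ).add_const bb
    have B1 := (phase_aux_rpow A1 (-(1:ℝ)/2) (ne_of_gt hu1)).const_mul ((1:ℝ)/2)
    have B2 := (phase_aux_rpow A2 (-(1:ℝ)/2) (ne_of_gt hu2)).const_mul (h/2)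
    have C : HasDerivAt φ1
        (0 + K * ((1:ℝ)/2 * (-(1:ℝ)/2 * (u + a) ^ (-(1:ℝ)/2 - 1) * 1) -
          h/2 * (-(1:ℝ)/2 * (h * u - ξ + bb) ^ (-(1:ℝ)/2 - 1) * h))) u :=
      (hasDerivAt_const u v).add ((B1.sub B2).const_mul K)
    have hval : 0 + K * ((1:ℝ)/2 * (-(1:ℝ)/2 * (u + a) ^ (-(1:ℝ)/2 - 1) * 1) -
        h/2 * (-(1:ℝ)/2 * (h * u - ξ + bb) ^ (-(1:ℝ)/2 - 1) * h)) = φ2 u := by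
      rw [hφ2]
      simp only
      rw [show -(1:ℝ)/2 - 1 = -(3:ℝ)/2 by norm_num]
      ring
    rw [hval] at C
    exact C
  have hd3 : ∀ u ∈ U, HasDerivAt φ2 (φ3 u) u := by
    intro u hu
    obtain ⟨hu1, hu2⟩ := hu
    have A1 : HasDerivAt (fun x : ℝ => x + a) 1 u := (hasDerivAt_id u).add_const a
    have A2 : HasDerivAt (fun x : ℝ => h * x - ξ + bb) h u := by
      simpa using (((hasDerivAt_id u).const_mul h).sub_const ξ).add_const bb
    have B1 := (phase_aux_rpow A1 (-(3:ℝ)/2) (ne_of_gt hu1)).const_mul (-(1:ℝ)/4)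
    have B2 := (phase_aux_rpow A2 (-(3:ℝ)/2) (ne_of_gt hu2)).const_mul (h^2/4)
    have C : HasDerivAt φ2
        (K * (-(1:ℝ)/4 * (-(3:ℝ)/2 * (u + a) ^ (-(3:ℝ)/2 - 1) * 1) +
          h^2/4 * (-(3:ℝ)/2 * (h * u - ξ + bb) ^ (-(3:ℝ)/2 - 1) * h))) u :=
      ((B1.add B2).const_mul K)
    have hval : K * (-(1:ℝ)/4 * (-(3:ℝ)/2 * (u + a) ^ (-(3:ℝ)/2 - 1) * 1) +
        h^2/4 * (-(3:ℝ)/2 * (h * u - ξ + bb) ^ (-(3:ℝ)/2 - 1) * h)) = φ3 u := by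
      rw [hφ3]
      simp only
      rw [show -(3:ℝ)/2 - 1 = -(5:ℝ)/2 by norm_num]
      ring
    rw [hval] at C
    exact C
  have E1 : deriv φ0 =ᶠ[nhds s] φ1 :=
    Filter.eventually_of_mem hUn (fun u hu => (hd1 u hu).deriv)
  have E2 : deriv φ1 =ᶠ[nhds s] φ2 :=
    Filter.eventually_of_mem hUn (fun u hu => (hd2 u hu).deriv)
  have D1 : deriv φ =ᶠ[nhds s] φ1 := E0.deriv.trans E1
  have D2 : deriv (deriv φ) =ᶠ[nhds s] φ2 := D1.deriv.trans E2
  have I2 : iteratedDeriv 2 φ s = φ2 s := by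
    rw [show (2:ℕ) = 1+1 from rfl, iteratedDeriv_succ, iteratedDeriv_one]
    rw [D1.deriv_eq]
    exact (hd2 s hsU).deriv
  have I3 : iteratedDeriv 3 φ s = φ3 s := by
    rw [show (3:ℕ) = 1+1+1 from rfl, iteratedDeriv_succ, iteratedDeriv_succ, iteratedDeriv_one]
    rw [D2.deriv_eq]
    exact (hd3 s hsU).deriv
  -- introduce p and q
  set p : ℝ := X ^ (-(1:ℝ)/2) with hpdef
  set q : ℝ := Y ^ (-(1:ℝ)/2) with hqdef
  have hp0 : 0 < p := Real.rpow_pos_of_pos hXpos _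
  have hq0 : 0 < q := Real.rpow_pos_of_pos hYpos _
  have hp2X : p^2 * X = 1 := by
    have h1 : p ^ (2:ℕ) = X ^ (-(1:ℝ)) := by
      rw [hpdef, ← Real.rpow_natCast (X ^ (-(1:ℝ)/2)) 2, ← Real.rpow_mul hXpos.le]
      norm_num
    rw [h1, Real.rpow_neg_one]
    exact inv_mul_cancel₀ (ne_of_gt hXpos)
  have hq2Y : q^2 * Y = 1 := by
    have h1 : q ^ (2:ℕ) = Y ^ (-(1:ℝ)) := by
      rw [hqdef, ← Real.rpow_natCast (Y ^ (-(1:ℝ)/2)) 2, ← Real.rpow_mul hYpos.le]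
      norm_num
    rw [h1, Real.rpow_neg_one]
    exact inv_mul_cancel₀ (ne_of_gt hYpos)
  have hprw3 : X ^ (-(3:ℝ)/2) = p^3 := by
    rw [hpdef, ← Real.rpow_natCast (X ^ (-(1:ℝ)/2)) 3, ← Real.rpow_mul hXpos.le]
    norm_num
  have hqrw3 : Y ^ (-(3:ℝ)/2) = q^3 := by
    rw [hqdef, ← Real.rpow_natCast (Y ^ (-(1:ℝ)/2)) 3, ← Real.rpow_mul hYpos.le]
    norm_num
  have hprw5 : X ^ (-(5:ℝ)/2) = p^5 := by
    rw [hpdef, ← Real.rpow_natCast (X ^ (-(1:ℝ)/2)) 5, ← Real.rpow_mul hXpos.le]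
    norm_num
  have hqrw5 : Y ^ (-(5:ℝ)/2) = q^5 := by
    rw [hqdef, ← Real.rpow_natCast (Y ^ (-(1:ℝ)/2)) 5, ← Real.rpow_mul hYpos.le]
    norm_num
  -- express values
  have I2abs : |iteratedDeriv 2 φ s| = K/4 * |h^2*q^3 - p^3| := by
    rw [I2, hφ2]
    simp only
    rw [← hXdef, ← hYdef, hprw3, hqrw3,
      show K * (-(1:ℝ)/4 * p^3 + h^2/4 * q^3) = K/4 * (h^2*q^3 - p^3) from by ring,
      abs_mul, abs_of_pos (show (0:ℝ) < K/4 by linarith)]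
  have I3abs : |iteratedDeriv 3 φ s| = 3*K/8 * |p^5 - h^3*q^5| := by
    rw [I3, hφ3]
    simp only
    rw [← hXdef, ← hYdef, hprw5, hqrw5,
      show K * (3/8 * p^5 - 3*h^3/8 * q^5) = 3*K/8 * (p^5 - h^3*q^5) from by ring,
      abs_mul, abs_of_pos (show (0:ℝ) < 3*K/8 by linarith)]
  -- the key arithmetic relation
  have hab : h * a = bb := by
    rw [hhdef, hadef, hbbdef]
    field_simp
  have hXi : ξ = h * X - Y := by
    rw [hXdef, hYdef]
    linear_combination -hab
  have hMK : (2:ℝ) ^ ((j:ℝ)/3) ≤ K * |ξ| := by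
    have e : K * (2:ℝ) ^ (-(j:ℝ)/100) = 2 ^ ((j:ℝ)/2 + -(j:ℝ)/100) := by
      rw [hKdef, ← Real.rpow_add two_pos]
    have mono : (2:ℝ) ^ ((j:ℝ)/3) ≤ 2 ^ ((j:ℝ)/2 + -(j:ℝ)/100) :=
      Real.rpow_le_rpow_of_exponent_le one_le_two
        (by have hj : (0:ℝ) ≤ j := Nat.cast_nonneg j; linarith)
    calc (2:ℝ) ^ ((j:ℝ)/3) ≤ 2 ^ ((j:ℝ)/2 + -(j:ℝ)/100) := mono
      _ = K * (2:ℝ) ^ (-(j:ℝ)/100) := e.symm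
      _ ≤ K * |ξ| := mul_le_mul_of_nonneg_left hξ hK0.le
  have hM0 : (0:ℝ) < 2 ^ ((j:ℝ)/3) := Real.rpow_pos_of_pos two_pos _
  exact phase_aux_num h ξ X Y p q K (2 ^ ((j:ℝ)/3)) _ _ hhpos hh1 hX0 hX2 hY0 hY2'
    hp0 hq0 hp2X hq2Y hK0 hM0 hXi hMK I2abs I3abs
end
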